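/- (ℓ² convolution estimate for the SQG multiplier.) Let s ∈ (1/2,1] and σ ∈ (1/s,2), so that σs > 1. There exists a constant C > 0 depending only on s and σ such that for all v, w : ℤ² → ℂ with v(0) = w(0) = 0: ∑_{k ∈ ℤ², k ≠ 0} |∑_{j ∈ ℤ², j ≠ 0, j ≠ k} (((k−j)·j^⊥)/(|k−j|^{σs}|j|^{1+σs})) v(k−j) w(j)|² ≤ C² (∑_{j ≠ 0} |v(j)|²)(∑_{j ≠ 0} |w(j)|²). -/

import Mathlib

open scoped ENNReal NNReal
open MeasureTheory

noncomputable section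

/-- Euclidean norm of a lattice point `k ∈ ℤ² ⊆ ℝ²`. -/
def znorm (k : ℤ × ℤ) : ℝ := Real.sqrt ((k.1 : ℝ) ^ 2 + (k.2 : ℝ) ^ 2)

/-- `j^⊥ · k` where `j^⊥ = (−j₂, j₁)`. -/
def perpDot (j k : ℤ × ℤ) : ℝ := (-(j.2 : ℝ)) * (k.1 : ℝ) + (j.1 : ℝ) * (k.2 : ℝ)

/-- Gevrey norm `‖a‖_{ρ,φ} = (∑_{k≠0} |k|^{2ρ} e^{2φ|k|^s} |a k|²)^{1/2}`, valued in `ℝ≥0∞`. -/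
def gnorm (s ρ φ : ℝ) (a : ℤ × ℤ → ℂ) : ℝ≥0∞ :=
  (∑' k : ℤ × ℤ, if k = 0 then 0 else
    ENNReal.ofReal (znorm k ^ (2 * ρ) * Real.exp (2 * φ * znorm k ^ s) * ‖a k‖ ^ 2)) ^ (1/2 : ℝ)

/-! Since `|(k - j) · j^⊥| ≤ |k - j| |j|`, `|k - j| ≥ 1` and `σs ≥ 1`, the multiplier is bounded by
`|j|^(-σs)`, which is square summable over `ℤ²` because `2σs > 2`. Cauchy–Schwarz in `j` bounds the
`k`-th term by `(∑_j |j|^(-2σs)) ∑_j |v (k - j)|² |w j|²`, and summing over `k` (Tonelli and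
translation invariance) gives the product of the two `ℓ²` norms. Working in `ℝ≥0∞` removes all
summability side conditions. -/

theorem ENNReal.tsum_mul_sq_le {ι : Type*} (f g : ι → ℝ≥0∞) :
    (∑' i, f i * g i) ^ 2 ≤ (∑' i, f i ^ 2) * ∑' i, g i ^ 2 := by
  rw [ENNReal.tsum_eq_iSup_sum, ENNReal.iSup_pow_of_ne_zero two_ne_zero]
  refine iSup_le fun s => ?_
  have holder := ENNReal.inner_le_Lp_mul_Lq s f g Real.HolderConjugate.two_two
  simp only [ENNReal.rpow_two] at holder
  calc (∑ i ∈ s, f i * g i) ^ 2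
      ≤ ((∑ i ∈ s, f i ^ 2) ^ (2⁻¹ : ℝ) * (∑ i ∈ s, g i ^ 2) ^ (2⁻¹ : ℝ)) ^ 2 := by
        gcongr; simpa using holder
    _ = (∑ i ∈ s, f i ^ 2) * ∑ i ∈ s, g i ^ 2 := by
        rw [mul_pow]
        congr 1 <;> exact_mod_cast ENNReal.rpow_inv_natCast_pow two_ne_zero _
    _ ≤ (∑' i, f i ^ 2) * ∑' i, g i ^ 2 := by gcongr <;> exact ENNReal.sum_le_tsum s

lemma enorm_tsum_sq_le_of_enorm_le_mul {ι ε : Type*} [TopologicalSpace ε]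
    [ESeminormedAddCommMonoid ε] {f : ι → ε} {a b : ι → ℝ≥0∞} (h : ∀ i, ‖f i‖ₑ ≤ a i * b i) :
    ‖∑' i, f i‖ₑ ^ 2 ≤ (∑' i, a i ^ 2) * ∑' i, b i ^ 2 :=
  (pow_le_pow_left₀ zero_le (enorm_tsum_le_tsum_enorm.trans (ENNReal.tsum_le_tsum h)) 2).trans
    (ENNReal.tsum_mul_sq_le a b)

theorem ENNReal.tsum_tsum_mul_sub {G : Type*} [AddGroup G] (f g : G → ℝ≥0∞) :
    ∑' k, ∑' j, f (k - j) * g j = (∑' k, f k) * ∑' j, g j := by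
  rw [ENNReal.tsum_comm, ← ENNReal.tsum_mul_left]
  refine tsum_congr fun j => ?_
  rw [ENNReal.tsum_mul_right]
  exact congrArg (· * g j) ((Equiv.subRight j).tsum_eq f)

lemma tsum_ite_ofReal_norm_sq_eq_tsum_enorm_sq {ι E : Type*} [Zero ι] [DecidableEq ι]
    [SeminormedAddGroup E] {v : ι → E} (hv : v 0 = 0) :
    (∑' j, if j = 0 then 0 else ENNReal.ofReal (‖v j‖ ^ 2)) = ∑' j, ‖v j‖ₑ ^ 2 :=
  tsum_congr fun j => by split_ifs with hj <;> simp [hj, hv, ← ofReal_norm, ENNReal.ofReal_pow]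

lemma znorm_nonneg (k : ℤ × ℤ) : 0 ≤ znorm k := Real.sqrt_nonneg _

lemma one_le_znorm {k : ℤ × ℤ} (hk : k ≠ 0) : 1 ≤ znorm k := by
  have hsq : (1 : ℤ) ≤ k.1 ^ 2 + k.2 ^ 2 := by
    rcases not_and_or.mp (mt Prod.ext_iff.mpr hk) with h | h
    · nlinarith [Int.one_le_abs h, sq_abs k.1, sq_nonneg k.2]
    · nlinarith [Int.one_le_abs h, sq_abs k.2, sq_nonneg k.1]
  exact Real.one_le_sqrt.mpr (by exact_mod_cast hsq)

lemma abs_perpDot_le (j u : ℤ × ℤ) : |perpDot j u| ≤ znorm j * znorm u := by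
  rw [znorm, znorm, ← Real.sqrt_mul (by positivity)]
  exact Real.abs_le_sqrt (by unfold perpDot; nlinarith [sq_nonneg ((j.1 : ℝ) * u.1 + j.2 * u.2)])

lemma norm_vecCons_le_znorm (k : ℤ × ℤ) : ‖![k.1, k.2]‖ ≤ znorm k := by
  refine (pi_norm_le_iff_of_nonneg (Real.sqrt_nonneg _)).mpr (Fin.forall_fin_two.mpr ⟨?_, ?_⟩)
  · simpa [Int.norm_eq_abs] using Real.abs_le_sqrt (le_add_of_nonneg_right (sq_nonneg (k.2 : ℝ)))
  · simpa [Int.norm_eq_abs] using Real.abs_le_sqrt (le_add_of_nonneg_left (sq_nonneg (k.1 : ℝ)))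

def latticeWeight (p : ℝ) (j : ℤ × ℤ) : ℝ := if j = 0 then 0 else znorm j ^ (-p)

lemma latticeWeight_nonneg (p : ℝ) (j : ℤ × ℤ) : 0 ≤ latticeWeight p j := by
  unfold latticeWeight; split_ifs
  exacts [le_rfl, Real.rpow_nonneg (znorm_nonneg j) _]

lemma latticeWeight_sq (p : ℝ) (j : ℤ × ℤ) : latticeWeight p j ^ 2 = latticeWeight (2 * p) j := by
  unfold latticeWeight
  split_ifs
  · simp
  · rw [← Real.rpow_mul_natCast (znorm_nonneg j)]; ring_nf

lemma summable_latticeWeight {q : ℝ} (hq : 2 < q) : Summable (latticeWeight q) := by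
  refine ((finTwoArrowEquiv ℤ).symm.summable_iff.mpr
    (EisensteinSeries.summable_one_div_norm_rpow hq)).of_nonneg_of_le (latticeWeight_nonneg q)
    fun j => ?_
  unfold latticeWeight
  split_ifs with hj
  · exact Real.rpow_nonneg (norm_nonneg _) _
  · refine Real.rpow_le_rpow_of_nonpos ?_ (norm_vecCons_le_znorm j) (by linarith)
    simpa [Prod.ext_iff] using hj

/-- The multiplier `m(k, j)` of the statement, with `p = σs`. -/
def sqgKernel (p : ℝ) (k j : ℤ × ℤ) : ℝ :=
  perpDot j (k - j) / (znorm (k - j) ^ p * znorm j ^ (1 + p))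

lemma abs_sqgKernel_le {p : ℝ} (hp : 1 ≤ p) {k j : ℤ × ℤ} (hj : j ≠ 0) (hjk : j ≠ k) :
    |sqgKernel p k j| ≤ latticeWeight p j := by
  have hu : 1 ≤ znorm (k - j) := one_le_znorm (sub_ne_zero.mpr hjk.symm)
  have hj₀ : 0 < znorm j := one_pos.trans_le (one_le_znorm hj)
  have hden : 0 < znorm (k - j) ^ p * znorm j ^ (1 + p) := by
    have := one_pos.trans_le hu; positivity
  rw [sqgKernel, latticeWeight, if_neg hj, abs_div, abs_of_pos hden, div_le_iff₀ hden,
    mul_left_comm, ← Real.rpow_add hj₀, show -p + (1 + p) = 1 by ring, Real.rpow_one]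
  calc |perpDot j (k - j)| ≤ znorm j * znorm (k - j) := abs_perpDot_le j (k - j)
    _ ≤ znorm j * znorm (k - j) ^ p := by
      gcongr; exact Real.self_le_rpow_of_one_le hu hp
    _ = _ := mul_comm _ _

lemma summable_latticeWeight_sq {p : ℝ} (hp : 1 < p) : Summable fun j => latticeWeight p j ^ 2 := by
  simpa only [latticeWeight_sq] using summable_latticeWeight (by linarith : 2 < 2 * p)

lemma enorm_sqgConvolution_sq_le {p : ℝ} (hp : 1 < p) (v w : ℤ × ℤ → ℂ) (k : ℤ × ℤ) :
    ‖∑' j : ℤ × ℤ, if j = 0 ∨ j = k then 0 else (sqgKernel p k j : ℂ) * v (k - j) * w j‖ₑ ^ 2 ≤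
      ENNReal.ofReal (∑' j, latticeWeight p j ^ 2) * ∑' j, ‖v (k - j)‖ₑ ^ 2 * ‖w j‖ₑ ^ 2 := by
  have hterm : ∀ j, ‖if j = 0 ∨ j = k then 0 else (sqgKernel p k j : ℂ) * v (k - j) * w j‖ₑ ≤
      ENNReal.ofReal (latticeWeight p j) * (‖v (k - j)‖ₑ * ‖w j‖ₑ) := by
    intro j
    split_ifs with hj
    · simp
    · push Not at hj
      rw [enorm_mul, enorm_mul, mul_assoc, ← ofReal_norm, Complex.norm_real, Real.norm_eq_abs]
      gcongr
      exact abs_sqgKernel_le hp.le hj.1 hj.2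
  calc _ ≤ (∑' j, ENNReal.ofReal (latticeWeight p j) ^ 2) *
        ∑' j, (‖v (k - j)‖ₑ * ‖w j‖ₑ) ^ 2 := enorm_tsum_sq_le_of_enorm_le_mul hterm
    _ = _ := by
      simp_rw [← ENNReal.ofReal_pow (latticeWeight_nonneg p _), mul_pow]
      rw [ENNReal.ofReal_tsum_of_nonneg (fun j => sq_nonneg _) (summable_latticeWeight_sq hp)]

/-- **ℓ² convolution estimate for the SQG multiplier.** For `s ∈ (1/2,1]`, `σ ∈ (1/s,2)`
(so `σs > 1`), there is `C > 0` (depending only on `s, σ`) such that for all `v, w : ℤ² → ℂ`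
with `v(0) = w(0) = 0`:
`∑_{k≠0} |∑_{j≠0,j≠k} (((k−j)·j^⊥)/(|k−j|^{σs}|j|^{1+σs})) v(k−j) w(j)|²
  ≤ C² (∑_{j≠0}|v(j)|²)(∑_{j≠0}|w(j)|²)`. -/
theorem sqg_multiplier_convolution_estimate
    (s σ : ℝ) (hs : s ∈ Set.Ioc (1/2 : ℝ) 1) (hσ : σ ∈ Set.Ioo (1/s) 2) :
    ∃ C : ℝ, 0 < C ∧
      ∀ v w : ℤ × ℤ → ℂ, v 0 = 0 → w 0 = 0 →
        (∑' k : ℤ × ℤ, if k = 0 then 0 else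
            ENNReal.ofReal
              (‖∑' j : ℤ × ℤ, if j = 0 ∨ j = k then 0 else
                  ((perpDot j (k - j) / (znorm (k - j) ^ (σ * s) * znorm j ^ (1 + σ * s)) : ℝ) : ℂ)
                    * v (k - j) * w j‖ ^ 2)) ≤
          ENNReal.ofReal (C ^ 2) *
            (∑' j : ℤ × ℤ, if j = 0 then 0 else ENNReal.ofReal (‖v j‖ ^ 2)) *
            ∑' j : ℤ × ℤ, if j = 0 then 0 else ENNReal.ofReal (‖w j‖ ^ 2) := by
  have hp : 1 < σ * s := (div_lt_iff₀ (by linarith [hs.1])).mp hσ.1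
  set M := ∑' j, latticeWeight (σ * s) j ^ 2
  have hM : 0 ≤ M := tsum_nonneg fun j => sq_nonneg _
  refine ⟨Real.sqrt (M + 1), by positivity, fun v w hv hw => ?_⟩
  rw [Real.sq_sqrt (by linarith), tsum_ite_ofReal_norm_sq_eq_tsum_enorm_sq hv,
    tsum_ite_ofReal_norm_sq_eq_tsum_enorm_sq hw]
  calc _ ≤ ∑' k, ENNReal.ofReal M * ∑' j, ‖v (k - j)‖ₑ ^ 2 * ‖w j‖ₑ ^ 2 :=
        ENNReal.tsum_le_tsum fun k => by
          split_ifs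
          · exact zero_le
          · rw [ENNReal.ofReal_pow (norm_nonneg _), ofReal_norm]
            exact enorm_sqgConvolution_sq_le hp v w k
    _ = ENNReal.ofReal M * (∑' j, ‖v j‖ₑ ^ 2) * ∑' j, ‖w j‖ₑ ^ 2 := by
        rw [ENNReal.tsum_mul_left, mul_assoc,
          ENNReal.tsum_tsum_mul_sub (fun u => ‖v u‖ₑ ^ 2) fun j => ‖w j‖ₑ ^ 2]
    _ ≤ _ := by gcongr; linarith
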